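/- arXiv:2403.05927 — 6 statements merged into one kernel-verified Lean document; each statement's English description precedes it below -/
import Mathlib

section
/- For all integers m ≥ 0 and k ≥ 1, the nested sum ∑_{i₁=0}^{k} ⋯ ∑_{i_{k-1}=0}^{k} ∑_{i_k=0}^{k-i₁-⋯-i_{k-1}} C(m, i_k)·C(i_k, i_{k-1})⋯C(i₂, i₁) equals C(m+k, m). -/
open Finset

private def g : ℕ → ℕ → ℕ → ℕ
  | _, 0, _ => 1
  | m, n+1, t => ∑ x ∈ Finset.range (t+1), m.choose x * g x n (t - x)

private lemma g_zero (n t : ℕ) : g 0 n t = 1 := by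
  induction n generalizing t with
  | zero => rfl
  | succ n ih =>
    rw [g, Finset.sum_eq_single 0]
    · simpa using ih t
    · intro b _ hb
      simp [Nat.choose_eq_zero_of_lt (Nat.pos_of_ne_zero hb)]
    · simp

private lemma g_eq (n : ℕ) : ∀ m t, t ≤ n → g m n t = (m + t).choose t := by
  induction n with
  | zero =>
    intro m t ht
    interval_cases t
    simp [g]
  | succ n ih =>
    intro m t ht
    rw [g, Nat.add_choose_eq m t t, Finset.Nat.sum_antidiagonal_eq_sum_range_succ_mk]
    apply Finset.sum_congr rfl
    intro x hx
    simp only [Finset.mem_range] at hx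
    rcases Nat.eq_zero_or_pos x with rfl | hx1
    · simp [g_zero]
    · rw [ih x (t - x) (by omega)]
      congr 2
      omega

private lemma L' (n : ℕ) : ∀ m t : ℕ,
    ∑ i ∈ (Fintype.piFinset fun _ : Fin (n+1) => Finset.range (t + 1)).filter
        (fun i => ∑ j, i j ≤ t),
      m.choose (i (Fin.last n)) *
        ∏ j : Fin n, (i j.succ).choose (i j.castSucc)
    = g m (n+1) t := by
  induction n with
  | zero =>
    intro m t
    rw [g]
    refine Finset.sum_bij' (fun i _ => i 0) (fun x _ => fun _ => x) ?_ ?_ ?_ ?_ ?_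
    · intro i hi
      simp only [Finset.mem_filter, Fintype.mem_piFinset] at hi
      exact hi.1 0
    · intro x hx
      simp only [Finset.mem_range] at hx
      simp only [Finset.mem_filter, Fintype.mem_piFinset, Finset.mem_range]
      constructor
      · intro _; omega
      · simp [Fin.sum_univ_one]; omega
    · intro i _
      funext j
      fin_cases j
      rfl
    · intro x _; rfl
    · intro i _
      simp [g]
  | succ n ih =>
    intro m t
    rw [g]
    have step : ∀ x ∈ Finset.range (t+1), m.choose x * g x (n+1) (t - x)
        = ∑ i ∈ (Fintype.piFinset fun _ : Fin (n+1) => Finset.range (t - x + 1)).filter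
            (fun i => ∑ j, i j ≤ t - x),
          m.choose x * (x.choose (i (Fin.last n)) *
            ∏ j : Fin n, (i j.succ).choose (i j.castSucc)) := by
      intro x _
      rw [← ih x (t - x), Finset.mul_sum]
    rw [Finset.sum_congr rfl step, Finset.sum_sigma']
    refine (Finset.sum_bij' (fun p _ => Fin.snoc p.2 p.1)
      (fun i _ => ⟨i (Fin.last (n+1)), Fin.init i⟩) ?_ ?_ ?_ ?_ ?_).symm
    · -- forward membership
      rintro ⟨x, i'⟩ hp
      simp only [Finset.mem_sigma, Finset.mem_range, Finset.mem_filter,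
        Fintype.mem_piFinset] at hp ⊢
      obtain ⟨hx, hi', hsum⟩ := hp
      have hs : ∑ j, Fin.snoc i' x j = (∑ j, i' j) + x := by
        rw [Fin.sum_univ_castSucc]
        simp
      constructor
      · intro j
        induction j using Fin.lastCases with
        | last => simp only [Fin.snoc_last]; omega
        | cast j =>
          rw [Fin.snoc_castSucc]
          have := hi' j
          omega
      · omega
    · -- backward membership
      intro i hi
      simp only [Finset.mem_filter, Fintype.mem_piFinset, Finset.mem_range] at hi
      obtain ⟨hb, hsum⟩ := hi
      have hs : (∑ j, Fin.init i j) + i (Fin.last (n+1)) = ∑ j, i j := by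
        rw [Fin.sum_univ_castSucc (f := i)]
        rfl
      simp only [Finset.mem_sigma, Finset.mem_range, Finset.mem_filter,
        Fintype.mem_piFinset, Finset.mem_range]
      refine ⟨?_, ?_, ?_⟩
      · have := Finset.single_le_sum (f := i) (fun _ _ => Nat.zero_le _)
          (Finset.mem_univ (Fin.last (n+1)))
        omega
      · intro j
        have hle : Fin.init i j ≤ ∑ j', Fin.init i j' :=
          Finset.single_le_sum (fun _ _ => Nat.zero_le _) (Finset.mem_univ j)
        omega
      · omega
    · rintro ⟨x, i'⟩ _
      simp [Fin.init_snoc, Fin.snoc_last]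
    · intro i _
      exact Fin.snoc_init_self i
    · rintro ⟨x, i'⟩ _
      rw [Fin.prod_univ_castSucc]
      simp only [Fin.succ_castSucc, Fin.snoc_castSucc, Fin.succ_last, Fin.snoc_last]
      ring


/-- For all integers `m ≥ 0` and `k ≥ 1`, the nested sum
`∑_{i₁=0}^{k} ⋯ ∑_{i_{k-1}=0}^{k} ∑_{i_k=0}^{k-i₁-⋯-i_{k-1}} C(m,i_k)·C(i_k,i_{k-1})⋯C(i₂,i₁)`
equals `C(m+k, m)`.  The nested sum is expressed as a sum over all tuples
`(i₁, …, i_k)` with `i₁ + ⋯ + i_k ≤ k` (terms with a negative inner upper bound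
form an empty sum and contribute nothing). -/
theorem nested_binomial_sum (m k : ℕ) (hk : 1 ≤ k) :
    ∑ i ∈ (Fintype.piFinset fun _ : Fin k => Finset.range (k + 1)).filter
        (fun i => ∑ j, i j ≤ k),
      m.choose (i (Fin.cast (Nat.succ_pred_eq_of_pos hk) (Fin.last (k - 1)))) *
        ∏ j : Fin (k - 1),
          (i (Fin.cast (Nat.succ_pred_eq_of_pos hk) j.succ)).choose
            (i (Fin.cast (Nat.succ_pred_eq_of_pos hk) j.castSucc))
      = (m + k).choose m := by
  rcases k with _ | n
  · omega
  · rw [Nat.choose_symm_add, ← g_eq (n+1) m (n+1) le_rfl]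
    exact L' n m (n+1)
end

section
/- Let n ≥ 2 and d, r ≥ 0 be integers with (n−1)(d−1)+1 ≤ r ≤ (n−1)d. Then ∑_{i₁=0}^{d} ⋯ ∑_{i_{n-2}=0}^{d} ∑_{i_{n-1}=r−i₁−⋯−i_{n-2}}^{d} (r − i₁ − ⋯ − i_{n-1})·C(d, i₁)·C(i₁, i₂)⋯C(i_{n-2}, i_{n-1}) = −C(nd−r, d+1). -/
/-- `tailChainSum d t acc p` is the nested sum with `t` outer indices ranging over
`{0, …, d}` followed by one final index `i` ranging from `max(0, acc − (outer indices))`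
to `d`, the summand being `(acc − (all indices))·(chain of binomial coefficients)`:
`tailChainSum d 0 acc p = ∑_{i=max(0,acc)}^{d} (acc − i)·C(p, i)` and the outer indices
contribute factors `C(p, i₁)·C(i₁, i₂)⋯`. -/
def tailChainSum (d : ℕ) : ℕ → ℤ → ℕ → ℤ
  | 0, acc, p =>
      ∑ i ∈ (Finset.range (d + 1)).filter (fun i : ℕ => acc ≤ (i : ℤ)),
        (acc - (i : ℤ)) * (p.choose i : ℤ)
  | t + 1, acc, p =>
      ∑ i ∈ Finset.range (d + 1), (p.choose i : ℤ) * tailChainSum d t (acc - i) i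

open Finset


lemma S0_eq (d : ℕ) (acc : ℤ) (p : ℕ) :
    tailChainSum d 0 acc p
      = ∑ i ∈ range (d+1), (-((((i:ℤ) - acc).toNat : ℤ))) * (p.choose i : ℤ) := by
  rw [tailChainSum, Finset.sum_filter]
  refine Finset.sum_congr rfl fun i _ => ?_
  split_ifs with h
  · have h1 : (((i:ℤ) - acc).toNat : ℤ) = (i:ℤ) - acc := Int.toNat_of_nonneg (by omega)
    rw [h1]; ring
  · have h1 : ((i:ℤ) - acc).toNat = 0 := by omega
    rw [h1]; simp

lemma HK (q : ℕ) (hq : 1 ≤ q) (X : ℤ) (hX : X ≤ q) :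
    ∀ k : ℕ, ∑ v ∈ range k, (((X + v).toNat.choose q : ℕ) : ℤ)
      = (((X + k).toNat.choose (q+1) : ℕ) : ℤ) := by
  intro k
  induction k with
  | zero =>
      simp only [range_zero, sum_empty]
      have : (X.toNat) ≤ q := by omega
      rw [Nat.choose_eq_zero_of_lt (by omega)]
      simp
  | succ k ih =>
      rw [Finset.sum_range_succ, ih]
      rcases le_or_gt 0 (X + k) with h | h
      · have h1 : (X + (k+1 : ℕ)).toNat = (X + k).toNat + 1 := by push_cast; omega
        rw [h1, Nat.choose_succ_succ]
        push_cast
        ring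
      · have h1 : (X + k).toNat = 0 := by omega
        have h2 : (X + (k+1:ℕ)).toNat ≤ 1 := by push_cast; omega
        have h3 : ((X + (k+1:ℕ)).toNat.choose (q+1)) = 0 :=
          Nat.choose_eq_zero_of_lt (by omega)
        have h4 : ((0:ℕ).choose q) = 0 := Nat.choose_eq_zero_of_lt (by omega)
        rw [h1, h3, h4]
        simp [Nat.choose_eq_zero_of_lt, hq]

lemma Zp (d : ℕ) : ∀ t (acc : ℤ), tailChainSum d t acc 0 = min acc 0 := by
  intro t
  induction t with
  | zero =>
      intro acc
      rw [S0_eq]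
      rcases le_or_gt acc 0 with h | h
      · rw [Finset.sum_eq_single 0]
        · simp; omega
        · intro i _ hi
          rw [Nat.choose_eq_zero_of_lt (by omega)]; simp
        · simp
      · rw [Finset.sum_eq_zero, eq_comm, min_eq_right (by omega)]
        intro i _
        rcases Nat.eq_zero_or_pos i with rfl | hi
        · have : ((0:ℤ) - acc).toNat = 0 := by simp; omega
          simp [this]; omega
        · rw [Nat.choose_eq_zero_of_lt (by omega)]; simp
  | succ t ih =>
      intro acc
      rw [tailChainSum, Finset.sum_eq_single 0]
      · simpa using ih acc
      · intro i _ hi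
        rw [Nat.choose_eq_zero_of_lt (by omega)]; simp
      · simp

lemma V (d : ℕ) : ∀ t q, q + 1 ≤ d → ∀ acc : ℤ,
    tailChainSum d t acc (q+1)
      = ∑ v ∈ range (t+2), tailChainSum d t (acc - (v:ℕ)) q := by
  intro t
  induction t with
  | zero =>
      intro q hq acc
      rw [Finset.sum_range_succ, Finset.sum_range_succ, Finset.sum_range_zero]
      rw [S0_eq, S0_eq, S0_eq]
      have hrw : ∀ (p : ℕ) (b : ℤ), ∑ i ∈ range (d+1), (-(((i:ℤ) - b).toNat : ℤ)) * (p.choose i : ℤ)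
          = -∑ i ∈ range (d+1), ((((i:ℤ) - b).toNat : ℤ)) * (p.choose i : ℤ) := by
        intro p b
        rw [← Finset.sum_neg_distrib]
        exact Finset.sum_congr rfl fun i _ => by ring
      rw [hrw, hrw, hrw]
      have e0 : acc - ((0:ℕ):ℤ) = acc := by norm_num
      have e1 : acc - ((1:ℕ):ℤ) = acc - 1 := by norm_num
      rw [e0, e1]
      have key : ∑ i ∈ range (d+1), ((((i:ℤ)-acc).toNat : ℤ)) * ((q+1).choose i : ℤ)
          = (∑ i ∈ range (d+1), ((((i:ℤ)-acc).toNat : ℤ)) * (q.choose i : ℤ))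
          + ∑ i ∈ range (d+1), ((((i:ℤ)-(acc-1)).toNat : ℤ)) * (q.choose i : ℤ) := by
        rw [Finset.sum_range_succ' (fun i => ((((i:ℤ)-acc).toNat : ℤ)) * ((q+1).choose i : ℤ)) d,
            Finset.sum_range_succ' (fun i => ((((i:ℤ)-acc).toNat : ℤ)) * (q.choose i : ℤ)) d,
            Finset.sum_range_succ (fun i => ((((i:ℤ)-(acc-1)).toNat : ℤ)) * (q.choose i : ℤ)) d]
        rw [Nat.choose_eq_zero_of_lt (show q < d by omega)]
        have hterm : ∀ i ∈ range d, ((((i+1:ℕ):ℤ)-acc).toNat : ℤ) * ((q+1).choose (i+1) : ℤ)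
            = ((((i+1:ℕ):ℤ)-acc).toNat : ℤ) * (q.choose (i+1) : ℤ)
              + ((((i:ℕ):ℤ)-(acc-1)).toNat : ℤ) * (q.choose i : ℤ) := by
          intro i _
          have h2 : (((i:ℕ):ℤ) - (acc-1)).toNat = ((((i+1:ℕ)):ℤ) - acc).toNat := by
            push_cast; omega
          rw [h2]
          push_cast [Nat.choose_succ_succ]
          ring
        rw [Finset.sum_congr rfl hterm, Finset.sum_add_distrib]
        simp only [Nat.choose_zero_right]
        push_cast
        ring
      linarith [key]
  | succ t ih =>
      intro q hq acc
      rw [tailChainSum]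
      -- peel off i = 0
      rw [Finset.sum_range_succ']
      have hchoose : ∀ i : ℕ, ((q+1).choose (i+1) : ℤ) = (q.choose i : ℤ) + (q.choose (i+1) : ℤ) := by
        intro i; push_cast [Nat.choose_succ_succ]; ring
      have hsplit : ∑ i ∈ range d, ((q+1).choose (i+1) : ℤ) * tailChainSum d t (acc - (i+1:ℕ)) (i+1)
          = (∑ i ∈ range d, (q.choose i : ℤ) * tailChainSum d t (acc - (i+1:ℕ)) (i+1))
          + ∑ i ∈ range d, (q.choose (i+1) : ℤ) * tailChainSum d t (acc - (i+1:ℕ)) (i+1) := by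
        rw [← Finset.sum_add_distrib]
        exact Finset.sum_congr rfl fun i _ => by rw [hchoose]; ring
      rw [hsplit]
      -- third piece plus the i=0 term reassembles tailChainSum d (t+1) acc q
      have hpiece13 : (∑ i ∈ range d, (q.choose (i+1) : ℤ) * tailChainSum d t (acc - (i+1:ℕ)) (i+1))
          + ((q+1).choose 0 : ℤ) * tailChainSum d t (acc - (0:ℕ)) 0
          = tailChainSum d (t+1) acc q := by
        rw [tailChainSum, Finset.sum_range_succ']
        simp
      -- second piece: apply IH
      have hpiece2 : ∑ i ∈ range d, (q.choose i : ℤ) * tailChainSum d t (acc - (i+1:ℕ)) (i+1)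
          = ∑ v ∈ range (t+2), tailChainSum d (t+1) (acc - ((v+1:ℕ))) q := by
        have step1 : ∀ i ∈ range d, (q.choose i : ℤ) * tailChainSum d t (acc - (i+1:ℕ)) (i+1)
            = ∑ v ∈ range (t+2), (q.choose i : ℤ) * tailChainSum d t (acc - ((v+1:ℕ)) - i) i := by
          intro i hi
          rw [ih i (by simp at hi; omega) (acc - (i+1:ℕ)), Finset.mul_sum]
          refine Finset.sum_congr rfl fun v _ => ?_
          congr 1
          push_cast
          ring_nf
        rw [Finset.sum_congr rfl step1, Finset.sum_comm]
        refine Finset.sum_congr rfl fun v _ => ?_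
        rw [tailChainSum]
        -- extend range d to range (d+1): the i = d term vanishes
        rw [Finset.sum_range_succ, Nat.choose_eq_zero_of_lt (by omega)]
        simp
      calc (∑ i ∈ range d, (q.choose i : ℤ) * tailChainSum d t (acc - (i+1:ℕ)) (i+1))
              + (∑ i ∈ range d, (q.choose (i+1) : ℤ) * tailChainSum d t (acc - (i+1:ℕ)) (i+1))
              + ((q+1).choose 0 : ℤ) * tailChainSum d t (acc - (0:ℕ)) 0
          = (∑ v ∈ range (t+2), tailChainSum d (t+1) (acc - ((v+1:ℕ))) q)
              + tailChainSum d (t+1) (acc - (0:ℕ)) q := by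
            rw [hpiece2, add_assoc, hpiece13]
            norm_num
        _ = ∑ v ∈ range (t+2+1), tailChainSum d (t+1) (acc - (v:ℕ)) q := by
            conv_rhs => rw [Finset.sum_range_succ']

lemma CF (d : ℕ) : ∀ p : ℕ, p ≤ d → ∀ (t : ℕ) (acc : ℤ),
    ((t:ℤ)+1) * p - ((t:ℤ)+2) ≤ acc →
    tailChainSum d t acc p = -((((((t:ℤ)+2) * p - acc).toNat.choose (p+1) : ℕ)) : ℤ) := by
  intro p
  induction p with
  | zero =>
      intro _ t acc _
      rw [Zp]
      simp only [Nat.cast_zero, mul_zero, zero_sub]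
      rw [show (0+1)=1 from rfl, Nat.choose_one_right]
      rcases le_or_gt acc 0 with h | h
      · rw [min_eq_left h]; omega
      · rw [min_eq_right (by omega)]; omega
  | succ p ih =>
      intro hpd t acc hacc
      rw [V d t p (by omega) acc]
      push_cast at hacc
      have hX : ((t:ℤ)+2) * p - acc ≤ (p:ℤ) + 1 := by nlinarith [hacc]
      have hterm : ∀ v ∈ range (t+2), tailChainSum d t (acc - (v:ℕ)) p
          = -((((((t:ℤ)+2) * p - acc + (v:ℕ)).toNat.choose (p+1) : ℕ)) : ℤ) := by
        intro v hv
        simp only [mem_range] at hv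
        have hv' : ((v:ℕ):ℤ) ≤ (t:ℤ)+1 := by exact_mod_cast Nat.lt_succ_iff.mp (by omega)
        have hcond : ((t:ℤ)+1) * p - ((t:ℤ)+2) ≤ acc - (v:ℕ) := by nlinarith
        rw [ih (by omega) t (acc - v) hcond]
        have harg : ((t:ℤ)+2) * p - (acc - (v:ℕ)) = ((t:ℤ)+2) * p - acc + (v:ℕ) := by ring
        rw [harg]
      rw [Finset.sum_congr rfl hterm]
      rw [Finset.sum_neg_distrib]
      rw [HK (p+1) (by omega) _ (by exact_mod_cast hX) (t+2)]
      have harg2 : ((t:ℤ)+2) * p - acc + ((t+2:ℕ):ℤ) = ((t:ℤ)+2) * ((p:ℤ)+1) - acc := by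
        push_cast; ring
      rw [harg2]
      norm_num

/-- Let `n ≥ 2` and `d, r ≥ 0` be integers with `(n−1)(d−1)+1 ≤ r ≤ (n−1)d`.  Then
`∑_{i₁=0}^{d} ⋯ ∑_{i_{n-2}=0}^{d} ∑_{i_{n-1}=r−i₁−⋯−i_{n-2}}^{d}
  (r − i₁ − ⋯ − i_{n-1})·C(d,i₁)·C(i₁,i₂)⋯C(i_{n-2},i_{n-1}) = −C(nd−r, d+1)`,
the inner index running from `max(0, r − i₁ − ⋯ − i_{n-2})` to `d`. -/
theorem tailChainSum_eq (n d r : ℕ) (hn : 2 ≤ n)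
    (h1 : ((n : ℤ) - 1) * ((d : ℤ) - 1) + 1 ≤ (r : ℤ))
    (h2 : (r : ℤ) ≤ ((n : ℤ) - 1) * (d : ℤ)) :
    tailChainSum d (n - 2) (r : ℤ) d = -((n * d - r).choose (d + 1) : ℤ) := by

  have hc2 : (((n-2:ℕ)):ℤ) = (n:ℤ) - 2 := by
    have : (2:ℤ) ≤ n := by exact_mod_cast hn
    push_cast [Nat.cast_sub hn]; ring
  have hcond : (((n-2:ℕ):ℤ)+1) * d - (((n-2:ℕ):ℤ)+2) ≤ (r:ℤ) := by
    rw [hc2]; nlinarith [h1]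
  rw [CF d d le_rfl (n-2) r hcond, hc2]
  have hle : r ≤ n * d := by
    have hd : (r:ℤ) ≤ (n:ℤ) * d := by nlinarith [h2]
    exact_mod_cast hd
  have harg : ((n:ℤ) - 2 + 2) * d - (r:ℤ) = ((n*d - r : ℕ) : ℤ) := by
    push_cast [Nat.cast_sub hle]; ring
  rw [harg, Int.toNat_natCast]
end

section
/- Fix n ≥ 1 and define a_n(s, t) for integers s ≥ 1 and 0 ≤ t ≤ s−1 by a_n(s, 0) = s and a_n(s, t) = ∑_{i=1}^{min(s−t, n−1)} a_n(s−i, t−1) for t ≥ 1. Then for all n ≥ 2 and all valid s, t: a_n(s, t) = ∑_{i=0}^{s−t−1} a_{n-1}(s−t, i)·C(t, i). -/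
/-- The doubly-indexed sequence `a n s t` defined for `s ≥ 1` and `0 ≤ t ≤ s−1` by
`a n s 0 = s` and `a n s t = ∑_{i=1}^{min(s−t, n−1)} a n (s−i) (t−1)` for `t ≥ 1`. -/
def a (n : ℕ) : ℕ → ℕ → ℕ
  | s, 0 => s
  | s, t + 1 => ∑ i ∈ Finset.Icc 1 (min (s - (t + 1)) (n - 1)), a n (s - i) t

lemma a_zero (n s t : ℕ) (h : s ≤ t) : a n s t = 0 := by
  cases t with
  | zero => interval_cases s; rfl
  | succ t =>
    have h0 : s - (t+1) = 0 := by omega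
    rw [show a n s (t+1) = ∑ i ∈ Finset.Icc 1 (min (s - (t + 1)) (n - 1)), a n (s - i) t from rfl, h0]
    simp

lemma sum_Icc_one (k : ℕ) (f : ℕ → ℕ) :
    ∑ i ∈ Finset.Icc 1 k, f i = ∑ i ∈ Finset.range k, f (1 + i) := by
  rw [← Finset.Ico_add_one_right_eq_Icc, Finset.sum_Ico_eq_sum_range]
  simp

lemma key (N m j : ℕ) (hN : 1 ≤ N) :
    ∑ i ∈ Finset.Icc 1 (min m N), a N (m + 1 - i) j = a N m j + a N m (j + 1) := by
  rcases Nat.eq_zero_or_pos m with hm | hm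
  · subst hm
    simp [a_zero N 0 j (Nat.zero_le j), a_zero N 0 (j+1) (Nat.zero_le _)]
  · rw [sum_Icc_one]
    have e0 : min m N = (min m N - 1) + 1 := by omega
    rw [e0, Finset.sum_range_succ']
    have e1 : ∀ i : ℕ, m + 1 - (1 + i) = m - i := by omega
    simp only [e1, Nat.sub_zero]
    rw [add_comm]
    congr 1
    rw [show a N m (j+1) = ∑ i ∈ Finset.Icc 1 (min (m - (j + 1)) (N - 1)), a N (m - i) j from rfl,
      sum_Icc_one]
    simp only [show ∀ i:ℕ, 1+i = i+1 from fun i => by omega]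
    symm
    apply Finset.sum_subset
    · apply Finset.range_subset_range.2; omega
    · intro x hx hx'
      simp only [Finset.mem_range] at hx hx'
      apply a_zero
      omega

/-- For all `n ≥ 2`, `s ≥ 1` and `0 ≤ t ≤ s−1`:
`a_n(s, t) = ∑_{i=0}^{s−t−1} a_{n-1}(s−t, i)·C(t, i)`. -/
theorem a_eq_sum (n s t : ℕ) (hn : 2 ≤ n) (hs : 1 ≤ s) (ht : t ≤ s - 1) :
    a n s t = ∑ i ∈ Finset.range (s - t), a (n - 1) (s - t) i * t.choose i := by
  induction t generalizing s with
  | zero =>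
    rw [Nat.sub_zero, show a n s 0 = s from rfl]
    rw [Finset.sum_eq_single 0]
    · simp [show a (n-1) s 0 = s from rfl]
    · intro b _ hb
      simp [Nat.choose_eq_zero_of_lt (by omega : (0:ℕ) < b)]
    · intro h
      exact absurd (Finset.mem_range.2 (by omega)) h
  | succ t ih =>
    obtain ⟨m, hm_def⟩ : ∃ m, s - (t + 1) = m := ⟨_, rfl⟩
    have hm : 1 ≤ m := by omega
    rw [show a n s (t+1) = ∑ i ∈ Finset.Icc 1 (min (s - (t + 1)) (n - 1)), a n (s - i) t from rfl,
      hm_def]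
    have step1 : ∀ i ∈ Finset.Icc 1 (min m (n-1)),
        a n (s - i) t = ∑ j ∈ Finset.range m, a (n-1) (m + 1 - i) j * t.choose j := by
      intro i hi
      simp only [Finset.mem_Icc] at hi
      have hi2 : i ≤ m := le_trans hi.2 (min_le_left _ _)
      rw [ih (s - i) (by omega) (by omega)]
      have e : s - i - t = m + 1 - i := by omega
      rw [e]
      apply Finset.sum_subset
      · apply Finset.range_subset_range.2; omega
      · intro x hx hx'
        simp only [Finset.mem_range] at hx hx'
        rw [a_zero _ _ _ (by omega)]
        ring
    rw [Finset.sum_congr rfl step1, Finset.sum_comm]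
    have step2 : ∀ j ∈ Finset.range m,
        ∑ i ∈ Finset.Icc 1 (min m (n-1)), a (n-1) (m + 1 - i) j * t.choose j
          = (a (n-1) m j + a (n-1) m (j+1)) * t.choose j := by
      intro j _
      rw [← Finset.sum_mul, key (n-1) m j (by omega)]
    rw [Finset.sum_congr rfl step2]
    -- now prove ∑ j ∈ range m, (A j + A (j+1)) * C t j = ∑ j ∈ range m, A j * C (t+1) j
    obtain ⟨m', rfl⟩ : ∃ m', m = m' + 1 := ⟨m - 1, by omega⟩
    simp only [add_mul, Finset.sum_add_distrib]
    rw [Finset.sum_range_succ' (fun j => a (n-1) (m'+1) j * (t+1).choose j) m',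
        Finset.sum_range_succ' (fun j => a (n-1) (m'+1) j * t.choose j) m',
        Finset.sum_range_succ (fun j => a (n-1) (m'+1) (j+1) * t.choose j) m']
    rw [a_zero (n-1) (m'+1) (m'+1) le_rfl]
    simp only [Nat.choose_succ_succ, Nat.choose_zero_right, mul_add, Finset.sum_add_distrib,
      zero_mul, add_zero]
    ring
end

section
/- Let G be a finite simple graph and r a nonnegative integer. Then m_e(G, r) ≤ r · m(G, r) where m(G, r) is the minimum size of a percolating set in the r-neighbor bootstrap percolation on G and m_e(G, r) is the minimum size of a percolating set in the r-edge bootstrap percolation on G. -/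
/-!
Take a minimum percolating vertex set `S` and, at each `v ∈ S`, keep `r` of its edges (all of
them if `v` has degree `< r`). After one edge step every edge at a vertex of `S` is active. From
then on the edge process dominates the vertex process: once all edges at the vertices of a set `T`
are active, a vertex with `r` neighbours in `T` sees `r` active edges, so all of its edges become
active in the next step. Hence these at most `r · |S|` edges percolate.
-/

/-- One round of the `r`-edge bootstrap percolation process on `G`: an inactive edge
becomes active if one of its endpoints is incident to at least `r` active edges. -/
def edgeStep {V : Type*} (G : SimpleGraph V) (r : ℕ) (A : Set (Sym2 V)) : Set (Sym2 V) :=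
  A ∪ {e | e ∈ G.edgeSet ∧ ∃ v ∈ e, r ≤ {f | f ∈ G.edgeSet ∧ v ∈ f ∧ f ∈ A}.ncard}

/-- A set `A` of edges of `G` percolates in the `r`-edge bootstrap percolation process
if iterating the activation rule eventually activates every edge of `G`. -/
def EdgePercolates {V : Type*} (G : SimpleGraph V) (r : ℕ) (A : Set (Sym2 V)) : Prop :=
  A ⊆ G.edgeSet ∧ ∃ k, (edgeStep G r)^[k] A = G.edgeSet

/-- `me G r` is the minimum size of a percolating set in the `r`-edge bootstrap
percolation process on `G`. -/
noncomputable def me {V : Type*} (G : SimpleGraph V) (r : ℕ) : ℕ :=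
  sInf {k | ∃ A, EdgePercolates G r A ∧ A.ncard = k}

/-- One round of the `r`-neighbor bootstrap percolation process on `G`: an inactive
vertex becomes active if it has at least `r` active neighbors. -/
def vertexStep {V : Type*} (G : SimpleGraph V) (r : ℕ) (A : Set V) : Set V :=
  A ∪ {v | r ≤ (G.neighborSet v ∩ A).ncard}

/-- A set `A` of vertices of `G` percolates in the `r`-neighbor bootstrap percolation
process if iterating the activation rule eventually activates every vertex. -/
def VertexPercolates {V : Type*} (G : SimpleGraph V) (r : ℕ) (A : Set V) : Prop :=
  ∃ k, (vertexStep G r)^[k] A = Set.univ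

/-- `mv G r` is the minimum size of a percolating set in the `r`-neighbor bootstrap
percolation process on `G`. -/
noncomputable def mv {V : Type*} (G : SimpleGraph V) (r : ℕ) : ℕ :=
  sInf {k | ∃ A, VertexPercolates G r A ∧ A.ncard = k}

namespace SimpleGraph

variable {V : Type*} (G : SimpleGraph V) (r : ℕ)

lemma incidenceSet_finite [G.LocallyFinite] (v : V) : (G.incidenceSet v).Finite := by
  classical
  exact Set.toFinite _

lemma edgeStep_mono [G.LocallyFinite] : Monotone (edgeStep G r) := by
  rintro E F hEF e (he | ⟨he, v, hv, hr⟩)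
  · exact Or.inl (hEF he)
  · refine Or.inr ⟨he, v, hv, hr.trans (Set.ncard_le_ncard ?_ ?_)⟩
    · exact fun f ⟨hf, hvf, hfE⟩ => ⟨hf, hvf, hEF hfE⟩
    · exact (G.incidenceSet_finite v).subset fun f ⟨hf, hvf, _⟩ => ⟨hf, hvf⟩

lemma iterate_edgeStep_subset_edgeSet {E : Set (Sym2 V)} (hE : E ⊆ G.edgeSet) (k : ℕ) :
    (edgeStep G r)^[k] E ⊆ G.edgeSet := by
  induction k with
  | zero => exact hE
  | succ k ih =>
    rw [Function.iterate_succ_apply']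
    rintro e (he | he)
    exacts [ih he, he.1]

lemma incidenceSet_subset_edgeStep {E : Set (Sym2 V)} {v : V}
    (h : r ≤ (G.incidenceSet v ∩ E).ncard) : G.incidenceSet v ⊆ edgeStep G r E := by
  have hE : {f | f ∈ G.edgeSet ∧ v ∈ f ∧ f ∈ E} = G.incidenceSet v ∩ E :=
    Set.ext fun _ => and_assoc.symm
  exact fun e ⟨he, hv⟩ => Or.inr ⟨he, v, hv, hE ▸ h⟩

lemma exists_subset_incidenceSet_ncard_le_subset_edgeStep (v : V) :
    ∃ F ⊆ G.incidenceSet v, F.ncard ≤ r ∧ G.incidenceSet v ⊆ edgeStep G r F := by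
  by_cases hr : r ≤ (G.incidenceSet v).ncard
  · obtain ⟨F, hF, hFr⟩ := Set.exists_subset_card_eq hr
    refine ⟨F, hF, hFr.le, G.incidenceSet_subset_edgeStep r ?_⟩
    rw [Set.inter_eq_right.mpr hF, hFr]
  · exact ⟨G.incidenceSet v, subset_rfl, (not_le.mp hr).le, Set.subset_union_left⟩

lemma incidenceSet_subset_edgeStep_of_mem_vertexStep [G.LocallyFinite] {T : Set V}
    {E : Set (Sym2 V)} (hT : ∀ u ∈ T, G.incidenceSet u ⊆ E) {v : V}
    (hv : v ∈ vertexStep G r T) : G.incidenceSet v ⊆ edgeStep G r E := by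
  rcases hv with hv | hv
  · exact (hT v hv).trans Set.subset_union_left
  have hmaps : ∀ u ∈ G.neighborSet v ∩ T, s(v, u) ∈ G.incidenceSet v ∩ E := by
    rintro u ⟨hvu, hu⟩
    have hvu' : s(v, u) ∈ G.edgeSet := hvu
    exact ⟨⟨hvu', Sym2.mem_mk_left v u⟩, hT u hu ⟨hvu', Sym2.mem_mk_right v u⟩⟩
  refine G.incidenceSet_subset_edgeStep r (hv.trans ?_)
  exact Set.ncard_le_ncard_of_injOn _ hmaps (fun _ _ _ _ => Sym2.congr_right.mp)
    ((G.incidenceSet_finite v).inter_of_left E)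

lemma incidenceSet_subset_iterate_edgeStep [G.LocallyFinite] {T : Set V}
    {E : Set (Sym2 V)} (hT : ∀ u ∈ T, G.incidenceSet u ⊆ E) (k : ℕ) :
    ∀ v ∈ (vertexStep G r)^[k] T, G.incidenceSet v ⊆ (edgeStep G r)^[k] E := by
  induction k with
  | zero => exact hT
  | succ k ih =>
    intro v hv
    rw [Function.iterate_succ_apply'] at hv ⊢
    exact G.incidenceSet_subset_edgeStep_of_mem_vertexStep r ih hv

lemma edgePercolates_of_vertexPercolates [G.LocallyFinite] {S : Set V} {E : Set (Sym2 V)}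
    (hS : VertexPercolates G r S) (hE : E ⊆ G.edgeSet)
    (hSE : ∀ v ∈ S, G.incidenceSet v ⊆ edgeStep G r E) : EdgePercolates G r E := by
  obtain ⟨k, hk⟩ := hS
  refine ⟨hE, k + 1, (G.iterate_edgeStep_subset_edgeSet r hE _).antisymm ?_⟩
  intro e he
  induction e using Sym2.ind with
  | _ a b =>
    rw [Function.iterate_succ_apply]
    exact G.incidenceSet_subset_iterate_edgeStep r hSE k a (hk ▸ trivial)
      ⟨he, Sym2.mem_mk_left a b⟩

end SimpleGraph

/-- For any finite simple graph `G` and nonnegative integer `r`: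
`m_e(G, r) ≤ r · m(G, r)`, where `m(G, r)` is the minimum size of a percolating set in
the `r`-neighbor bootstrap percolation on `G` and `m_e(G, r)` the minimum size of a
percolating set in the `r`-edge bootstrap percolation on `G`. -/
theorem me_le_r_mul_m {V : Type*} [Fintype V] (G : SimpleGraph V) (r : ℕ) :
    me G r ≤ r * mv G r := by
  classical
  obtain ⟨S, hS, hScard⟩ : mv G r ∈ {k | ∃ A, VertexPercolates G r A ∧ A.ncard = k} :=
    Nat.sInf_mem ⟨_, Set.univ, ⟨0, rfl⟩, rfl⟩
  choose F hFG hFr hFstep using G.exists_subset_incidenceSet_ncard_le_subset_edgeStep r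
  have hperc : EdgePercolates G r (⋃ v ∈ S.toFinset, F v) := by
    refine G.edgePercolates_of_vertexPercolates r hS ?_ fun v hv => (hFstep v).trans ?_
    · exact Set.iUnion₂_subset fun v _ => (hFG v).trans (G.incidenceSet_subset v)
    · exact G.edgeStep_mono r (Set.subset_biUnion_of_mem (Set.mem_toFinset.mpr hv))
  calc me G r ≤ (⋃ v ∈ S.toFinset, F v).ncard := Nat.sInf_le ⟨_, hperc, rfl⟩
    _ ≤ ∑ v ∈ S.toFinset, (F v).ncard := Finset.set_ncard_biUnion_le _ _
    _ ≤ ∑ _v ∈ S.toFinset, r := Finset.sum_le_sum fun v _ => hFr v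
    _ = r * mv G r := by
      rw [Finset.sum_const, smul_eq_mul, mul_comm, ← hScard, Set.ncard_eq_toFinset_card']
end

section
/- Let G be a finite simple graph and r a nonnegative integer. Then m(G, r) ≤ m_e(G, r) + |{v ∈ V(G) : deg(v) < r}|, where m(G, r) is the minimum percolating set size for r-neighbor bootstrap percolation and m_e(G, r) is the minimum percolating set size for r-edge bootstrap percolation. -/
lemma subset_vertexStep {V : Type*} (G : SimpleGraph V) (r : ℕ) (A : Set V) :
    A ⊆ vertexStep G r A := Set.subset_union_left

lemma subset_iterate_vertexStep {V : Type*} (G : SimpleGraph V) (r : ℕ) (A : Set V) (n : ℕ) :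
    A ⊆ (vertexStep G r)^[n] A := by
  induction n with
  | zero => simp
  | succ n ih =>
      rw [Function.iterate_succ_apply']
      exact ih.trans (subset_vertexStep G r _)

lemma exists_fixed_vertexStep {V : Type*} [Fintype V] (G : SimpleGraph V) (r : ℕ) (A : Set V) :
    ∃ n, vertexStep G r ((vertexStep G r)^[n] A) = (vertexStep G r)^[n] A := by
  by_contra h
  push_neg at h
  have hmono : StrictMono (fun n => ((vertexStep G r)^[n] A).ncard) := by
    apply strictMono_nat_of_lt_succ
    intro n
    apply Set.ncard_lt_ncard _ (Set.toFinite _)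
    rw [Function.iterate_succ_apply']
    exact ssubset_of_subset_of_ne (subset_vertexStep G r _) (Ne.symm (h n))
  have h1 : (Fintype.card V + 1 : ℕ) ≤ ((vertexStep G r)^[Fintype.card V + 1] A).ncard := hmono.le_apply
  have h2 : ((vertexStep G r)^[Fintype.card V + 1] A).ncard ≤ Fintype.card V := by
    have := Set.ncard_le_ncard (Set.subset_univ ((vertexStep G r)^[Fintype.card V + 1] A))
      (Set.toFinite _)
    simpa [Set.ncard_univ, Nat.card_eq_fintype_card] using this
  omega

lemma aux_endpoint {V : Type*} [Fintype V] (G : SimpleGraph V) (r : ℕ) (F : Set V)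
    (hF : vertexStep G r F = F) (v : V) (hv : v ∉ F)
    (S : Set (Sym2 V))
    (hS : ∀ f ∈ S, f ∈ G.edgeSet ∧ v ∈ f ∧ ∃ u ∈ f, u ∈ F)
    (hcard : r ≤ S.ncard) : False := by
  classical
  set φ : Sym2 V → V := fun f => if h : v ∈ f then Sym2.Mem.other h else v with hφ
  have hmem : ∀ f ∈ S, φ f ∈ G.neighborSet v ∩ F := by
    intro f hf
    obtain ⟨he, hvf, u, huf, huF⟩ := hS f hf
    simp only [hφ, dif_pos hvf]
    have hspec := Sym2.other_spec hvf
    constructor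
    · have : G.Adj v (Sym2.Mem.other hvf) := by
        rw [← SimpleGraph.mem_edgeSet, hspec]; exact he
      exact this
    · have hu : u = v ∨ u = Sym2.Mem.other hvf := by
        rw [← hspec] at huf
        exact Sym2.mem_iff.mp huf
      rcases hu with rfl | rfl
      · exact absurd huF hv
      · exact huF
  have hinj : Set.InjOn φ S := by
    intro f1 h1 f2 h2 heq
    obtain ⟨_, hv1, _⟩ := hS f1 h1
    obtain ⟨_, hv2, _⟩ := hS f2 h2
    simp only [hφ, dif_pos hv1, dif_pos hv2] at heq
    rw [← Sym2.other_spec hv1, ← Sym2.other_spec hv2, heq]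
  have hle : r ≤ (G.neighborSet v ∩ F).ncard := by
    calc r ≤ S.ncard := hcard
    _ = (φ '' S).ncard := (Set.ncard_image_of_injOn hinj).symm
    _ ≤ _ := Set.ncard_le_ncard (by rintro x ⟨f, hf, rfl⟩; exact hmem f hf) (Set.toFinite _)
  have : v ∈ vertexStep G r F := Or.inr hle
  rw [hF] at this
  exact hv this

lemma edge_invariant {V : Type*} [Fintype V] (G : SimpleGraph V) (r : ℕ) (F : Set V)
    (hF : vertexStep G r F = F) (A : Set (Sym2 V))
    (hA : ∀ e ∈ A, ∃ u ∈ e, u ∈ F) :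
    ∀ t, ∀ e ∈ (edgeStep G r)^[t] A, ∃ u ∈ e, u ∈ F := by
  intro t
  induction t with
  | zero => simpa using hA
  | succ t ih =>
      intro e he
      rw [Function.iterate_succ_apply'] at he
      rcases he with he | ⟨hee, v, hve, hr⟩
      · exact ih e he
      · by_cases hvF : v ∈ F
        · exact ⟨v, hve, hvF⟩
        · exact absurd (aux_endpoint G r F hF v hvF _
            (fun f hf => ⟨hf.1, hf.2.1, ih f hf.2.2⟩) hr) not_false

/-- For any finite simple graph `G` and nonnegative integer `r`:
`m(G, r) ≤ m_e(G, r) + |{v ∈ V(G) : deg(v) < r}|`. -/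
theorem m_le_me_add {V : Type*} [Fintype V] (G : SimpleGraph V) (r : ℕ) :
    mv G r ≤ me G r + {v | (G.neighborSet v).ncard < r}.ncard := by
  classical
  set L : Set V := {v | (G.neighborSet v).ncard < r} with hL
  -- obtain a minimum edge-percolating set
  have hne : {k | ∃ A, EdgePercolates G r A ∧ A.ncard = k}.Nonempty :=
    ⟨G.edgeSet.ncard, G.edgeSet, ⟨subset_rfl, 0, rfl⟩, rfl⟩
  obtain ⟨A, hAperc, hAcard⟩ := Nat.sInf_mem hne
  obtain ⟨hAsub, k, hk⟩ := hAperc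
  set B : Set V := (fun e : Sym2 V => e.out.1) '' A ∪ L with hB
  obtain ⟨n, hn⟩ := exists_fixed_vertexStep G r B
  set F : Set V := (vertexStep G r)^[n] B with hFdef
  have hBF : B ⊆ F := subset_iterate_vertexStep G r B n
  have hinv := edge_invariant G r F hn A
    (fun e heA => ⟨e.out.1, Sym2.out_fst_mem e, hBF (Or.inl ⟨e, heA, rfl⟩)⟩)
  have hFuniv : F = Set.univ := by
    rw [Set.eq_univ_iff_forall]
    intro w
    by_contra hwF
    have hwL : w ∉ L := fun h => hwF (hBF (Or.inr h))
    have hdeg : r ≤ (G.neighborSet w).ncard := le_of_not_gt hwL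
    refine aux_endpoint G r F hn w hwF {f | f ∈ G.edgeSet ∧ w ∈ f} ?_ ?_
    · intro f hf
      refine ⟨hf.1, hf.2, ?_⟩
      have : f ∈ (edgeStep G r)^[k] A := by rw [hk]; exact hf.1
      exact hinv k f this
    · calc r ≤ (G.neighborSet w).ncard := hdeg
      _ = ((fun u => s(w, u)) '' G.neighborSet w).ncard := by
            rw [Set.ncard_image_of_injOn]
            intro a _ b _ hab
            exact (Sym2.congr_right).mp hab
      _ ≤ _ := by
            apply Set.ncard_le_ncard _ (Set.toFinite _)
            rintro x ⟨u, hu, rfl⟩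
            exact ⟨(SimpleGraph.mem_edgeSet G).mpr hu, Sym2.mem_mk_left w u⟩
  have hperc : VertexPercolates G r B := ⟨n, hFuniv⟩
  have h1 : mv G r ≤ B.ncard := Nat.sInf_le ⟨B, hperc, rfl⟩
  have h2 : B.ncard ≤ A.ncard + L.ncard := by
    refine le_trans (Set.ncard_union_le _ _) ?_
    exact Nat.add_le_add_right (Set.ncard_image_le (Set.toFinite _)) _
  have h3 : A.ncard = me G r := hAcard
  omega
end

section
/- Let n ≥ 2, d ≥ 1, r ≥ 1 be integers, let f = r − 1 − (n−1)(d−1), and let g = 1 if f ≤ −2, g = f + 2 if −1 ≤ f ≤ n−2, and g = n if f ≥ n−1. Then m_e(K_n^d, r) ≤ ∑_{i=0}^{n-1} m_e(K_n^{d-1}, r−i) + C(g, 2)·n^{d-1}, where m_e(H, j) is interpreted as 0 for j < 0. -/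
/-- The Hamming graph `K_n^d`: vertices are `d`-tuples over `{0, …, n−1}`, with two
tuples adjacent if and only if they differ in exactly one coordinate. -/
def hammingGraph (n d : ℕ) : SimpleGraph (Fin d → Fin n) where
  Adj x y := ∃! i, x i ≠ y i
  symm := by
    constructor
    rintro x y ⟨i, hi, hu⟩
    exact ⟨i, hi.symm, fun j hj => hu j hj.symm⟩
  loopless := by
    constructor
    rintro x ⟨i, hi, -⟩
    exact hi rfl

/-!
Split `K_n^(m+1)` into the `n` layers `K_n^m × {a}`. Seed layer `a` with an optimal percolating
set of `K_n^m` for threshold `r - a`, and add all `C(g, 2) n^m` edges between the first `g`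
layers. Treat the layers in increasing order. Once everything below layer `a` is active, every
vertex of layer `a` has `a` active edges going down, so the seed of layer `a` percolates in it.
Then every vertex of layer `a` has `m (n - 1)` active edges inside its layer and at least `g - 1`
active edges to other layers, which is at least `r` by the choice of `g` (unless `g = n`, when all
edges between layers are seeded), so all edges leaving layer `a` become active.
-/

open Function

section EdgeBootstrap

variable {V W : Type*} {G : SimpleGraph V} {r : ℕ}

lemma le_edgeStep (G : SimpleGraph V) (r : ℕ) : id ≤ edgeStep G r :=
  fun _ => Set.subset_union_left

lemma edgeStep_monotone [Finite V] (G : SimpleGraph V) (r : ℕ) : Monotone (edgeStep G r) := by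
  rintro A B hAB e (he | ⟨he, v, hv, hc⟩)
  · exact Or.inl (hAB he)
  · refine Or.inr ⟨he, v, hv, hc.trans (Set.ncard_le_ncard ?_)⟩
    exact fun f ⟨h1, h2, h3⟩ => ⟨h1, h2, hAB h3⟩

lemma iterate_edgeStep_subset_edgeSet {A : Set (Sym2 V)} (hA : A ⊆ G.edgeSet) (k : ℕ) :
    (edgeStep G r)^[k] A ⊆ G.edgeSet := by
  induction k with
  | zero => exact hA
  | succ k ih =>
    rw [iterate_succ_apply']
    exact Set.union_subset ih fun _ he => he.1

lemma mem_edgeStep_of_le_ncard [Finite V] {A : Set (Sym2 V)} {e : Sym2 V} (he : e ∈ G.edgeSet)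
    {v : V} (hv : v ∈ e) (S : Set V) (hS : ∀ u ∈ S, G.Adj v u ∧ s(v, u) ∈ A)
    (hr : r ≤ S.ncard) : e ∈ edgeStep G r A :=
  Or.inr ⟨he, v, hv, hr.trans <| Set.ncard_le_ncard_of_injOn (fun u => s(v, u))
    (fun u hu => ⟨(hS u hu).1, Sym2.mem_mk_left v u, (hS u hu).2⟩)
    (fun _ _ _ _ h => Sym2.congr_right.mp h)⟩

def Activates (G : SimpleGraph V) (r : ℕ) (A B : Set (Sym2 V)) : Prop :=
  ∃ k, B ⊆ (edgeStep G r)^[k] A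

namespace Activates

variable {A A' B C : Set (Sym2 V)}

lemma of_subset (h : B ⊆ A) : Activates G r A B := ⟨0, h⟩

lemma of_subset_edgeStep (h : B ⊆ edgeStep G r A) : Activates G r A B := ⟨1, h⟩

lemma mono_right (h : C ⊆ B) (hAB : Activates G r A B) : Activates G r A C :=
  let ⟨k, hk⟩ := hAB
  ⟨k, h.trans hk⟩

lemma union (hAB : Activates G r A B) (hAC : Activates G r A C) :
    Activates G r A (B ∪ C) := by
  obtain ⟨k, hk⟩ := hAB
  obtain ⟨l, hl⟩ := hAC
  have hmono := monotone_iterate_of_id_le (le_edgeStep G r)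
  exact ⟨max k l, Set.union_subset (hk.trans (hmono (le_max_left k l) A))
    (hl.trans (hmono (le_max_right k l) A))⟩

variable [Finite V]

lemma mono_left (h : A ⊆ A') (hAB : Activates G r A B) : Activates G r A' B :=
  let ⟨k, hk⟩ := hAB
  ⟨k, hk.trans ((edgeStep_monotone G r).iterate k h)⟩

lemma trans (hAB : Activates G r A B) (hBC : Activates G r B C) : Activates G r A C := by
  obtain ⟨k, hk⟩ := hAB
  obtain ⟨l, hl⟩ := hBC
  refine ⟨l + k, hl.trans ?_⟩
  rw [iterate_add_apply]
  exact (edgeStep_monotone G r).iterate l hk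

end Activates

lemma EdgePercolates.of_activates {A : Set (Sym2 V)} (hA : A ⊆ G.edgeSet)
    (h : Activates G r A G.edgeSet) : EdgePercolates G r A :=
  let ⟨k, hk⟩ := h
  ⟨hA, k, (iterate_edgeStep_subset_edgeSet hA k).antisymm hk⟩

lemma me_le_ncard {A : Set (Sym2 V)} (h : EdgePercolates G r A) : me G r ≤ A.ncard :=
  Nat.sInf_le ⟨A, h, rfl⟩

lemma exists_edgePercolates_ncard_eq_me (G : SimpleGraph V) (r : ℕ) :
    ∃ A, EdgePercolates G r A ∧ A.ncard = me G r :=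
  Nat.sInf_mem (s := {k | ∃ A, EdgePercolates G r A ∧ A.ncard = k})
    ⟨_, G.edgeSet, ⟨subset_rfl, 0, rfl⟩, rfl⟩

lemma edgePercolates_zero_empty (G : SimpleGraph V) : EdgePercolates G 0 ∅ :=
  ⟨Set.empty_subset _, 1, (iterate_edgeStep_subset_edgeSet (Set.empty_subset _) 1).antisymm
    fun e he => Or.inr ⟨he, e.out.1, Sym2.out_fst_mem e, Nat.zero_le _⟩⟩

lemma me_zero (G : SimpleGraph V) : me G 0 = 0 :=
  Nat.eq_zero_of_le_zero ((me_le_ncard (edgePercolates_zero_empty G)).trans_eq (Set.ncard_empty _))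

section Embedding

variable [Finite V] {H : SimpleGraph W} (φ : H →g G) {ρ t s : ℕ} {D : Set (Sym2 V)}

/-- Edges of `D` add `s` to the count at every vertex of the copy of `H`, so a threshold `t`
process in `H` is simulated by a threshold `ρ ≤ t + s` process in `G`. -/
lemma image_edgeStep_union_subset (hφ : Injective φ) (hts : ρ ≤ t + s) (hD : D ⊆ G.edgeSet)
    (hdisj : Disjoint D (Sym2.map φ '' H.edgeSet))
    (hcount : ∀ w, s ≤ {e | e ∈ D ∧ φ w ∈ e}.ncard) (A : Set (Sym2 W)) :
    Sym2.map φ '' edgeStep H t A ∪ D ⊆ edgeStep G ρ (Sym2.map φ '' A ∪ D) := by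
  rintro _ (⟨e, he | ⟨he, w, hw, hc⟩, rfl⟩ | hd)
  · exact le_edgeStep G ρ _ (Or.inl (Set.mem_image_of_mem _ he))
  · refine Or.inr ⟨φ.map_mem_edgeSet he, φ w, Sym2.mem_map.2 ⟨w, hw, rfl⟩, ?_⟩
    set N := {f | f ∈ H.edgeSet ∧ w ∈ f ∧ f ∈ A}
    set Dw := {e | e ∈ D ∧ φ w ∈ e}
    have hsub : Sym2.map φ '' N ∪ Dw ⊆
        {f | f ∈ G.edgeSet ∧ φ w ∈ f ∧ f ∈ Sym2.map φ '' A ∪ D} := by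
      rintro _ (⟨f, ⟨hf, hwf, hfA⟩, rfl⟩ | ⟨hf, hwf⟩)
      · exact ⟨φ.map_mem_edgeSet hf, Sym2.mem_map.2 ⟨w, hwf, rfl⟩, Or.inl ⟨f, hfA, rfl⟩⟩
      · exact ⟨hD hf, hwf, Or.inr hf⟩
    have hND : Disjoint (Sym2.map φ '' N) Dw :=
      (hdisj.mono (fun _ h => h.1) (Set.image_mono fun _ h => h.1)).symm
    calc ρ ≤ N.ncard + Dw.ncard := hts.trans (add_le_add hc (hcount w))
      _ = (Sym2.map φ '' N ∪ Dw).ncard := by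
        rw [Set.ncard_union_eq hND, Set.ncard_image_of_injective _ (Sym2.map.injective hφ)]
      _ ≤ _ := Set.ncard_le_ncard hsub
  · exact le_edgeStep G ρ _ (Or.inr hd)

lemma activates_image_of_edgePercolates (hφ : Injective φ) (hts : ρ ≤ t + s)
    (hD : D ⊆ G.edgeSet) (hdisj : Disjoint D (Sym2.map φ '' H.edgeSet))
    (hcount : ∀ w, s ≤ {e | e ∈ D ∧ φ w ∈ e}.ncard) {A : Set (Sym2 W)}
    (hA : EdgePercolates H t A) :
    Activates G ρ (Sym2.map φ '' A ∪ D) (Sym2.map φ '' H.edgeSet) := by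
  obtain ⟨-, k, hk⟩ := hA
  have hsim : ∀ j, Sym2.map φ '' (edgeStep H t)^[j] A ∪ D ⊆
      (edgeStep G ρ)^[j] (Sym2.map φ '' A ∪ D) := by
    intro j
    induction j with
    | zero => exact subset_rfl
    | succ j ih =>
      rw [iterate_succ_apply', iterate_succ_apply']
      exact (image_edgeStep_union_subset φ hφ hts hD hdisj hcount _).trans
        (edgeStep_monotone G ρ ih)
  exact ⟨k, hk ▸ Set.subset_union_left.trans (hsim k)⟩

end Embedding

end EdgeBootstrap

lemma Fin.ncard_setOf_val_lt {n g : ℕ} (hg : g ≤ n) : {d : Fin n | (d : ℕ) < g}.ncard = g := by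
  classical
  rw [Set.ncard_eq_toFinset_card', Set.toFinset_ofPred, Fin.card_filter_val_lt, min_eq_right hg]

namespace Hamming

variable {n m : ℕ}

lemma adj_snoc_snoc_iff {x y : Fin m → Fin n} {a b : Fin n} :
    (hammingGraph n (m + 1)).Adj (Fin.snoc x a) (Fin.snoc y b) ↔
      a = b ∧ (hammingGraph n m).Adj x y ∨ a ≠ b ∧ x = y := by
  constructor
  · rintro ⟨i, hi, hu⟩
    by_cases hab : a = b
    · subst hab
      induction i using Fin.lastCases with
      | last => simp at hi
      | cast i =>
        exact Or.inl ⟨rfl, i, by simpa using hi,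
          fun k hk => Fin.castSucc_injective _ (hu _ (by simpa using hk))⟩
    · refine Or.inr ⟨hab, funext fun k => by_contra fun hk => ?_⟩
      have hlast : Fin.last m = i := hu _ (by simpa using hab)
      exact (Fin.castSucc_lt_last k).ne (hlast ▸ hu _ (by simpa using hk))
  · rintro (⟨rfl, i, hi, hu⟩ | ⟨hab, rfl⟩)
    · refine ⟨i.castSucc, by simpa using hi, fun k hk => ?_⟩
      induction k using Fin.lastCases with
      | last => simp at hk
      | cast k => rw [hu k (by simpa using hk)]
    · refine ⟨Fin.last m, by simpa using hab, fun k hk => ?_⟩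
      induction k using Fin.lastCases with
      | last => rfl
      | cast k => simp at hk

def layer (a : Fin n) : hammingGraph n m →g hammingGraph n (m + 1) where
  toFun x := Fin.snoc x a
  map_rel' h := adj_snoc_snoc_iff.2 (Or.inl ⟨rfl, h⟩)

@[simp]
lemma layer_apply (a : Fin n) (x : Fin m → Fin n) : layer a x = Fin.snoc x a := rfl

lemma layer_injective (a : Fin n) : Injective (layer (m := m) a) :=
  fun _ _ h => by simpa using h

lemma adj_layer_layer (x : Fin m → Fin n) {a b : Fin n} (hab : a ≠ b) :
    (hammingGraph n (m + 1)).Adj (layer a x) (layer b x) :=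
  adj_snoc_snoc_iff.2 (Or.inr ⟨hab, rfl⟩)

lemma ncard_neighborSet (x : Fin m → Fin n) :
    ((hammingGraph n m).neighborSet x).ncard = m * (n - 1) := by
  classical
  let N := (Finset.univ.sigma fun i => Finset.univ.erase (x i)).image
    fun p : (_ : Fin m) × Fin n => update x p.1 p.2
  have hN : (hammingGraph n m).neighborSet x = N := by
    ext y
    simp only [SimpleGraph.mem_neighborSet, N, Finset.coe_image, Set.mem_image,
      Finset.mem_coe, Finset.mem_sigma, Finset.mem_univ, Finset.mem_erase, and_true, true_and]
    constructor
    · rintro ⟨i, hi, hu⟩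
      refine ⟨⟨i, y i⟩, Ne.symm hi, funext fun k => ?_⟩
      by_cases hk : k = i
      · subst hk; simp
      · rw [update_of_ne hk]
        exact not_not.1 fun h => hk (hu k h)
    · rintro ⟨⟨i, c⟩, hc, rfl⟩
      refine ⟨i, by simpa using Ne.symm hc, fun k hk => by_contra fun hki => hk ?_⟩
      rw [update_of_ne hki]
  rw [hN, Set.ncard_coe_finset, Finset.card_image_of_injOn, Finset.card_sigma]
  · simp [Finset.card_erase_of_mem]
  · rintro ⟨i, c⟩ hc ⟨j, c'⟩ hc' h
    simp only [Finset.coe_sigma, Set.mem_sigma_iff, Finset.coe_erase, Set.mem_sdiff,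
      Set.mem_singleton_iff, Finset.coe_univ, Set.mem_univ, true_and] at hc hc'
    have hij : i = j := by
      by_contra hij
      have := congrFun h i
      simp [update_of_ne hij] at this
      exact hc this
    subst hij
    simpa using congrFun h i

def layerEdges (m : ℕ) (a : Fin n) : Set (Sym2 (Fin (m + 1) → Fin n)) :=
  Sym2.map (layer a) '' (hammingGraph n m).edgeSet

def layerEdgesBelow (n m j : ℕ) : Set (Sym2 (Fin (m + 1) → Fin n)) :=
  {e | ∃ a : Fin n, a < j ∧ e ∈ layerEdges m a}

def verticalEdgesBelow (n m j : ℕ) : Set (Sym2 (Fin (m + 1) → Fin n)) :=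
  {e | ∃ (x : Fin m → Fin n) (a b : Fin n), a < j ∧ a ≠ b ∧ e = s(layer a x, layer b x)}

def verticalClique (n m g : ℕ) : Set (Sym2 (Fin (m + 1) → Fin n)) :=
  {e | ∃ (x : Fin m → Fin n) (a b : Fin n), a < g ∧ b < g ∧ a ≠ b ∧ e = s(layer a x, layer b x)}

lemma layerEdges_subset_edgeSet (a : Fin n) :
    layerEdges m a ⊆ (hammingGraph n (m + 1)).edgeSet := by
  rintro _ ⟨e, he, rfl⟩
  exact (layer a).map_mem_edgeSet he

lemma verticalEdgesBelow_subset_edgeSet (j : ℕ) :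
    verticalEdgesBelow n m j ⊆ (hammingGraph n (m + 1)).edgeSet := by
  rintro _ ⟨x, a, b, -, hab, rfl⟩
  exact adj_layer_layer x hab

lemma verticalClique_subset_edgeSet (g : ℕ) :
    verticalClique n m g ⊆ (hammingGraph n (m + 1)).edgeSet := by
  rintro _ ⟨x, a, b, -, -, hab, rfl⟩
  exact adj_layer_layer x hab

lemma edgeSet_subset_layerEdgesBelow_union :
    (hammingGraph n (m + 1)).edgeSet ⊆ layerEdgesBelow n m n ∪ verticalEdgesBelow n m n := by
  intro e he
  induction e using Sym2.ind with
  | h u v =>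
  obtain ⟨x, a, rfl⟩ : ∃ x a, u = Fin.snoc x a := ⟨_, _, (Fin.snoc_init_self u).symm⟩
  obtain ⟨y, b, rfl⟩ : ∃ y b, v = Fin.snoc y b := ⟨_, _, (Fin.snoc_init_self v).symm⟩
  rcases adj_snoc_snoc_iff.1 he with ⟨rfl, hxy⟩ | ⟨hab, rfl⟩
  · exact Or.inl ⟨a, a.2, s(x, y), hxy, rfl⟩
  · exact Or.inr ⟨x, a, b, a.2, hab, rfl⟩

lemma disjoint_verticalEdgesBelow_layerEdges (j : ℕ) (c : Fin n) :
    Disjoint (verticalEdgesBelow n m j) (layerEdges m c) := by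
  rw [Set.disjoint_left]
  rintro _ ⟨x, a, b, -, hab, rfl⟩ ⟨f, -, hf⟩
  induction f using Sym2.ind with
  | h y z =>
  simp only [Sym2.map_mk, layer_apply, Sym2.eq_iff, Fin.snoc_inj] at hf
  rcases hf with ⟨⟨-, rfl⟩, -, rfl⟩ | ⟨⟨-, rfl⟩, -, rfl⟩ <;> exact hab rfl

lemma le_ncard_verticalEdgesBelow {j : ℕ} (a : Fin n) (ha : j ≤ a) (w : Fin m → Fin n) :
    j ≤ {e | e ∈ verticalEdgesBelow n m j ∧ layer a w ∈ e}.ncard := by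
  calc j = {b : Fin n | (b : ℕ) < j}.ncard := (Fin.ncard_setOf_val_lt (ha.trans a.2.le)).symm
    _ ≤ _ := by
      refine Set.ncard_le_ncard_of_injOn (fun b => s(layer b w, layer a w)) ?_ ?_
      · exact fun b (hb : (b : ℕ) < j) =>
          ⟨⟨w, b, a, hb, fun h => by omega, rfl⟩, Sym2.mem_mk_right _ _⟩
      · intro b _ b' _ h
        simpa using Sym2.congr_left.mp h

lemma ncard_verticalClique_le {g : ℕ} (hg : g ≤ n) :
    (verticalClique n m g).ncard ≤ g.choose 2 * n ^ m := by
  classical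
  let P : Finset (Sym2 (Fin n)) :=
    (Finset.univ.filter fun c : Fin n => c < g).offDiag.image (uncurry Sym2.mk)
  let F : (Fin m → Fin n) × Sym2 (Fin n) → Sym2 (Fin (m + 1) → Fin n) :=
    fun p => p.2.map (layer · p.1)
  have hsub : verticalClique n m g ⊆ ((Finset.univ ×ˢ P).image F : Set _) := by
    rintro _ ⟨x, a, b, ha, hb, hab, rfl⟩
    refine Finset.mem_coe.2 (Finset.mem_image.2 ⟨(x, s(a, b)), ?_, rfl⟩)
    refine Finset.mem_product.2 ⟨Finset.mem_univ _, Finset.mem_image.2 ⟨(a, b), ?_, rfl⟩⟩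
    exact Finset.mem_offDiag.2 ⟨by simpa using ha, by simpa using hb, hab⟩
  calc (verticalClique n m g).ncard ≤ ((Finset.univ ×ˢ P).image F).card := by
        rw [← Set.ncard_coe_finset]
        exact Set.ncard_le_ncard hsub
    _ ≤ (Finset.univ ×ˢ P).card := Finset.card_image_le
    _ = g.choose 2 * n ^ m := by
      rw [Finset.card_product, Sym2.card_image_offDiag, Fin.card_filter_val_lt,
        min_eq_right hg, Finset.card_univ, Fintype.card_fun, Fintype.card_fin,
        Fintype.card_fin, mul_comm]

lemma le_ncard_image_neighborSet_union_image {g : ℕ} (hg : g ≤ n) (c : Fin n)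
    (x : Fin m → Fin n) :
    m * (n - 1) + (g - 1) ≤ (layer c '' (hammingGraph n m).neighborSet x ∪
      (layer · x) '' ({d | (d : ℕ) < g} \ {c})).ncard := by
  have hdisj : Disjoint (layer c '' (hammingGraph n m).neighborSet x)
      ((layer · x) '' ({d | (d : ℕ) < g} \ {c})) := by
    rw [Set.disjoint_left]
    rintro _ ⟨y, -, rfl⟩ ⟨d, ⟨-, hdc⟩, hd⟩
    simp only [layer_apply, Fin.snoc_inj] at hd
    exact hdc hd.2
  have hvert := Set.pred_ncard_le_ncard_sdiff_singleton {d : Fin n | (d : ℕ) < g} c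
  rw [Fin.ncard_setOf_val_lt hg] at hvert
  rw [Set.ncard_union_eq hdisj, Set.ncard_image_of_injective _ (layer_injective c),
    Set.ncard_image_of_injective _ fun d d' h => by simpa using h, ncard_neighborSet]
  omega

lemma verticalEdgesBelow_succ_subset_edgeStep {r g : ℕ} (a : Fin n) (hg : g ≤ n)
    (hr : r ≤ m * (n - 1) + (g - 1) ∨ g = n) :
    verticalEdgesBelow n m (a + 1) ⊆ edgeStep (hammingGraph n (m + 1)) r
      (verticalEdgesBelow n m a ∪ layerEdges m a ∪ verticalClique n m g) := by
  rintro _ ⟨x, c, b, hc, hcb, rfl⟩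
  obtain hc | hca : (c : ℕ) < a ∨ c = a := (Nat.lt_succ_iff_lt_or_eq.1 hc).imp id Fin.ext
  · exact le_edgeStep _ _ _ (Or.inl (Or.inl ⟨x, c, b, hc, hcb, rfl⟩))
  subst hca
  obtain hr | rfl := hr
  swap
  · exact le_edgeStep _ _ _ (Or.inr ⟨x, c, b, c.2, b.2, hcb, rfl⟩)
  refine mem_edgeStep_of_le_ncard (adj_layer_layer x hcb) (Sym2.mem_mk_left _ _) _ ?_
    (hr.trans (le_ncard_image_neighborSet_union_image hg c x))
  rintro _ (⟨y, hxy, rfl⟩ | ⟨d, ⟨hd, hdc⟩, rfl⟩)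
  · exact ⟨(layer c).map_adj hxy, Or.inl (Or.inr ⟨s(x, y), hxy, rfl⟩)⟩
  replace hdc : d ≠ c := hdc
  refine ⟨adj_layer_layer x (Ne.symm hdc), ?_⟩
  rcases lt_or_gt_of_ne (Fin.val_ne_of_ne hdc) with hdc' | hdc'
  · exact Or.inl (Or.inl ⟨x, d, c, hdc', hdc, Sym2.eq_swap⟩)
  · exact Or.inr ⟨x, c, d, hdc'.trans hd, hd, Ne.symm hdc, rfl⟩

section Seed

variable {r g : ℕ}

def seed (A : Fin n → Set (Sym2 (Fin m → Fin n))) (g : ℕ) : Set (Sym2 (Fin (m + 1) → Fin n)) :=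
  (⋃ a, Sym2.map (layer a) '' A a) ∪ verticalClique n m g

variable {A : Fin n → Set (Sym2 (Fin m → Fin n))}

lemma seed_subset_edgeSet (hA : ∀ a, A a ⊆ (hammingGraph n m).edgeSet) :
    seed A g ⊆ (hammingGraph n (m + 1)).edgeSet :=
  Set.union_subset
    (Set.iUnion_subset fun a => (Set.image_mono (hA a)).trans (layerEdges_subset_edgeSet a))
    (verticalClique_subset_edgeSet g)

/-- Every vertex of layer `a` already has `a` active edges down to the lower layers, which makes
up for the lower threshold `r - a` of the seed in layer `a`. -/
lemma activates_layerEdges (hA : ∀ a : Fin n, EdgePercolates (hammingGraph n m) (r - a) (A a))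
    (a : Fin n) :
    Activates (hammingGraph n (m + 1)) r (seed A g ∪ verticalEdgesBelow n m a) (layerEdges m a) :=
  (activates_image_of_edgePercolates (layer a) (layer_injective a) (by omega)
    (verticalEdgesBelow_subset_edgeSet a) (disjoint_verticalEdgesBelow_layerEdges a a)
    (le_ncard_verticalEdgesBelow a le_rfl) (hA a)).mono_left
    (Set.union_subset_union_left _
      ((Set.subset_iUnion (fun a => Sym2.map (layer a) '' A a) a).trans Set.subset_union_left))

lemma activates_below (hA : ∀ a : Fin n, EdgePercolates (hammingGraph n m) (r - a) (A a))
    (hg : g ≤ n) (hr : r ≤ m * (n - 1) + (g - 1) ∨ g = n) :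
    ∀ j ≤ n, Activates (hammingGraph n (m + 1)) r (seed A g)
      (layerEdgesBelow n m j ∪ verticalEdgesBelow n m j)
  | 0, _ => .of_subset <| by
    rintro _ (⟨a, ha, -⟩ | ⟨-, a, -, ha, -⟩) <;> exact absurd ha (Nat.not_lt_zero _)
  | j + 1, hj => by
    let a : Fin n := ⟨j, hj⟩
    have hprev := activates_below hA hg hr j (by omega)
    have hlayer : Activates _ r (seed A g) (layerEdges m a) :=
      ((Activates.of_subset subset_rfl).union hprev).trans
        ((activates_layerEdges hA a).mono_left
          (Set.union_subset_union_right _ Set.subset_union_right))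
    have hvert : Activates _ r (seed A g) (verticalEdgesBelow n m (j + 1)) :=
      (((hprev.mono_right Set.subset_union_right).union hlayer).union
        (.of_subset Set.subset_union_right)).trans
        (.of_subset_edgeStep (verticalEdgesBelow_succ_subset_edgeStep a hg hr))
    refine ((hprev.union hlayer).union hvert).mono_right ?_
    rintro e (⟨b, hb, he⟩ | he)
    · obtain hb | rfl : (b : ℕ) < j ∨ b = a := (Nat.lt_succ_iff_lt_or_eq.1 hb).imp id Fin.ext
      · exact Or.inl (Or.inl (Or.inl ⟨b, hb, he⟩))
      · exact Or.inl (Or.inr he)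
    · exact Or.inr he

theorem me_succ_le (hg : g ≤ n) (hr : r ≤ m * (n - 1) + (g - 1) ∨ g = n) :
    me (hammingGraph n (m + 1)) r ≤
      ∑ a : Fin n, me (hammingGraph n m) (r - a) + g.choose 2 * n ^ m := by
  choose A hA hAcard using
    fun a : Fin n => exists_edgePercolates_ncard_eq_me (hammingGraph n m) (r - a)
  have hperc : EdgePercolates (hammingGraph n (m + 1)) r (seed A g) :=
    .of_activates (seed_subset_edgeSet fun a => (hA a).1)
      ((activates_below hA hg hr n le_rfl).mono_right edgeSet_subset_layerEdgesBelow_union)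
  have hlayers : (⋃ a, Sym2.map (layer a) '' A a).ncard ≤
      ∑ a : Fin n, me (hammingGraph n m) (r - a) := by
    refine (Set.ncard_iUnion_le_of_fintype _).trans_eq (Finset.sum_congr rfl fun a _ => ?_)
    rw [Set.ncard_image_of_injective _ (Sym2.map.injective (layer_injective a)), hAcard]
  calc me (hammingGraph n (m + 1)) r ≤ (seed A g).ncard := me_le_ncard hperc
    _ ≤ (⋃ a, Sym2.map (layer a) '' A a).ncard + (verticalClique n m g).ncard :=
      Set.ncard_union_le _ _
    _ ≤ _ := add_le_add hlayers (ncard_verticalClique_le hg)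

end Seed

end Hamming

theorem me_hamming_le_general (n d r : ℕ) (hn : 2 ≤ n) (hd : 1 ≤ d)
    (f : ℤ) (hf : f = (r : ℤ) - 1 - ((n : ℤ) - 1) * ((d : ℤ) - 1))
    (g : ℕ)
    (hg : (g : ℤ) = if f ≤ -2 then 1 else if f ≤ (n : ℤ) - 2 then f + 2 else (n : ℤ)) :
    me (hammingGraph n d) r ≤
      (∑ i ∈ Finset.range n, if i ≤ r then me (hammingGraph n (d - 1)) (r - i) else 0)
        + g.choose 2 * n ^ (d - 1) := by
  obtain ⟨m, rfl⟩ : ∃ m, d = m + 1 := ⟨d - 1, by omega⟩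
  have hK : ((m * (n - 1) : ℕ) : ℤ) = ((n : ℤ) - 1) * (((m + 1 : ℕ) : ℤ) - 1) := by
    push_cast [Nat.cast_sub (by omega : 1 ≤ n)]
    ring
  have hgr : g ≤ n ∧ (r ≤ m * (n - 1) + (g - 1) ∨ g = n) := by
    split_ifs at hg <;> omega
  have hsum : (∑ i ∈ Finset.range n, if i ≤ r then me (hammingGraph n m) (r - i) else 0) =
      ∑ a : Fin n, me (hammingGraph n m) (r - a) := by
    rw [← Fin.sum_univ_eq_sum_range]
    refine Finset.sum_congr rfl fun a _ => ?_
    split_ifs with h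
    · rfl
    -- for `a > r` the truncated threshold `r - a` is `0`
    · rw [Nat.sub_eq_zero_of_le (by omega), me_zero]
  rw [Nat.add_sub_cancel, hsum]
  exact Hamming.me_succ_le hgr.1 hgr.2

/-- Let `n ≥ 2`, `d ≥ 1`, `r ≥ 1` be integers, `f = r − 1 − (n−1)(d−1)`, and `g = 1`
if `f ≤ −2`, `g = f + 2` if `−1 ≤ f ≤ n−2`, and `g = n` if `f ≥ n−1`.  Then
`m_e(K_n^d, r) ≤ ∑_{i=0}^{n-1} m_e(K_n^{d-1}, r−i) + C(g, 2)·n^{d-1}`,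
where `m_e(H, j)` is interpreted as `0` for `j < 0`. -/
theorem me_hamming_le (n d r : ℕ) (hn : 2 ≤ n) (hd : 1 ≤ d) (hr : 1 ≤ r)
    (f : ℤ) (hf : f = (r : ℤ) - 1 - ((n : ℤ) - 1) * ((d : ℤ) - 1))
    (g : ℕ)
    (hg : (g : ℤ) = if f ≤ -2 then 1 else if f ≤ (n : ℤ) - 2 then f + 2 else (n : ℤ)) :
    me (hammingGraph n d) r ≤
      (∑ i ∈ Finset.range n, if i ≤ r then me (hammingGraph n (d - 1)) (r - i) else 0)
        + g.choose 2 * n ^ (d - 1) :=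
  me_hamming_le_general n d r hn hd f hf g hg
end
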